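/- arXiv:1603.00597 — 2 statements merged into one kernel-verified Lean document; each statement's English description precedes it below -/
import Mathlib

section
/- Suppose F: [0,∞) → ℝ is nondecreasing and for some A, γ > 0 the Laplace–Stieltjes transform satisfies ∫_0^∞ e^{−tα} dF(α) ∼ A t^{−γ} as t → 0⁺. Then F(τ) ∼ A τ^γ / Γ(γ+1) as τ → ∞. -/
/-!
Karamata's argument. Write `μ = dF` and compare `t^γ/A · ∫_{[0,∞)} φ(e^{-tα}) dμ(α)` as `t → 0⁺`
with `Γ(γ)⁻¹ ∫_0^∞ φ(e^{-u}) u^{γ-1} du`. For `φ(v) = v^{k+1}` the hypothesis at `(k+1)t` shows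
that the first tends to the second, `(k+1)^{-γ}`; by linearity this holds for `φ(v) = v p(v)`
with `p` a polynomial. Both sides are monotone in `φ`, so Weierstrass approximation of `φ(v)/v`
extends it to continuous `φ` vanishing near `0`, and squeezing the indicator of `[e⁻¹, ∞)`
between two continuous ramps extends it to that indicator. For the indicator the first quantity
is `t^γ μ[0, 1/t] / A` and the second is `1/Γ(γ+1)`; finally `F(τ) = μ[0, τ] + F(0⁻)`.
-/

open MeasureTheory Filter Set Topology Real Polynomial

lemma tendsto_of_forall_squeeze {ι : Type*} {l : Filter ι} {x : ι → ℝ} {L : ℝ}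
    (h : ∀ ε > 0, ∃ (lo hi : ι → ℝ) (a b : ℝ), Tendsto lo l (𝓝 a) ∧ Tendsto hi l (𝓝 b) ∧
      L - ε ≤ a ∧ b ≤ L + ε ∧ ∀ᶠ i in l, lo i ≤ x i ∧ x i ≤ hi i) :
    Tendsto x l (𝓝 L) := by
  refine tendsto_order.2 ⟨fun a' ha' => ?_, fun b' hb' => ?_⟩
  · obtain ⟨lo, _, a, _, hlo, _, ha, _, hx⟩ := h ((L - a') / 2) (by linarith)
    filter_upwards [hlo.eventually (lt_mem_nhds (by linarith : a' < a)), hx] with i hi hxi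
    exact hi.trans_le hxi.1
  · obtain ⟨_, hi, _, b, _, hhi, _, hb, hx⟩ := h ((b' - L) / 2) (by linarith)
    filter_upwards [hhi.eventually (gt_mem_nhds (by linarith : b < b')), hx] with i hi hxi
    exact hxi.2.trans_lt hi

noncomputable section

namespace Karamata

def laplaceRatio (μ : Measure ℝ) (A γ : ℝ) (φ : ℝ → ℝ) (t : ℝ) : ℝ :=
  (∫ α in Ici 0, φ (exp (-t * α)) ∂μ) / (A * t ^ (-γ))

def gammaWeighted (γ : ℝ) (φ : ℝ → ℝ) : ℝ :=
  ∫ u in Ioi 0, φ (exp (-u)) * u ^ (γ - 1)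

def HasKaramataLimit (μ : Measure ℝ) (A γ : ℝ) (φ : ℝ → ℝ) : Prop :=
  Tendsto (laplaceRatio μ A γ φ) (𝓝[>] 0) (𝓝 (gammaWeighted γ φ / Gamma γ))

def HasFiniteLaplace (μ : Measure ℝ) : Prop :=
  ∀ t > 0, IntegrableOn (fun α => exp (-t * α)) (Ici 0) μ

/-- The bound `|φ v| ≤ C v` makes both `φ(e^{-tα})` and `φ(e^{-u}) u^{γ-1}` integrable. -/
def Admissible (φ : ℝ → ℝ) : Prop :=
  Measurable φ ∧ ∃ C, ∀ v ∈ Icc (0 : ℝ) 1, |φ v| ≤ C * v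

lemma exp_neg_mem_Icc {x : ℝ} (hx : 0 ≤ x) : exp (-x) ∈ Icc (0 : ℝ) 1 :=
  ⟨(exp_pos _).le, exp_le_one_iff.2 (neg_nonpos.2 hx)⟩

section Admissible

variable {φ ψ : ℝ → ℝ}

lemma Admissible.add (hφ : Admissible φ) (hψ : Admissible ψ) : Admissible (φ + ψ) := by
  obtain ⟨hφm, C, hC⟩ := hφ
  obtain ⟨hψm, D, hD⟩ := hψ
  refine ⟨hφm.add hψm, C + D, fun v hv => ?_⟩
  calc |φ v + ψ v| ≤ |φ v| + |ψ v| := abs_add_le _ _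
    _ ≤ (C + D) * v := by linarith [hC v hv, hD v hv]

lemma admissible_mul_eval (p : ℝ[X]) : Admissible (fun v => v * p.eval v) := by
  refine ⟨(continuous_id.mul p.continuous).measurable, ?_⟩
  obtain ⟨C, hC⟩ :=
    isCompact_Icc.exists_bound_of_continuousOn (p.continuous.continuousOn (s := Icc (0 : ℝ) 1))
  refine ⟨C, fun v hv => ?_⟩
  rw [abs_mul, abs_of_nonneg hv.1, mul_comm]
  exact mul_le_mul_of_nonneg_right (hC v hv) hv.1

lemma admissible_of_continuous_of_eqOn_zero (hφ : Continuous φ) {δ : ℝ} (hδ : 0 < δ)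
    (hφ0 : ∀ v ∈ Icc 0 δ, φ v = 0) : Admissible φ := by
  refine ⟨hφ.measurable, ?_⟩
  obtain ⟨C, hC⟩ :=
    isCompact_Icc.exists_bound_of_continuousOn (hφ.continuousOn (s := Icc (0 : ℝ) 1))
  refine ⟨C / δ, fun v hv => ?_⟩
  rcases le_total v δ with hvδ | hδv
  · rw [hφ0 v ⟨hv.1, hvδ⟩, abs_zero]
    exact mul_nonneg (div_nonneg ((norm_nonneg _).trans (hC v hv)) hδ.le) hv.1
  · calc |φ v| ≤ C := hC v hv
      _ ≤ C / δ * v := by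
        rw [div_mul_eq_mul_div, le_div_iff₀ hδ]
        exact mul_le_mul_of_nonneg_left hδv ((norm_nonneg _).trans (hC v hv))

lemma admissible_indicator {s : Set ℝ} (hs : MeasurableSet s) {a : ℝ} (ha : 0 < a)
    (hsa : s ⊆ Ici a) : Admissible (s.indicator 1) := by
  refine ⟨measurable_const.indicator hs, a⁻¹, fun v hv₀ => ?_⟩
  by_cases hv : v ∈ s
  · rw [indicator_of_mem hv, Pi.one_apply, abs_one, inv_mul_eq_div, one_le_div ha]
    exact hsa hv
  · rw [indicator_of_notMem hv, abs_zero]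
    exact mul_nonneg (inv_nonneg.2 ha.le) hv₀.1

variable {μ : Measure ℝ} {t γ : ℝ}

lemma Admissible.integrableOn_laplace (hφ : Admissible φ) (hμ : HasFiniteLaplace μ) (ht : 0 < t) :
    IntegrableOn (fun α => φ (exp (-t * α))) (Ici 0) μ := by
  obtain ⟨hφm, C, hC⟩ := hφ
  refine ((hμ t ht).const_mul C).mono' (hφm.comp (by fun_prop)).aestronglyMeasurable ?_
  refine (ae_restrict_iff' measurableSet_Ici).2 (ae_of_all _ fun α hα => ?_)
  exact hC _ (neg_mul t α ▸ exp_neg_mem_Icc (mul_nonneg ht.le hα))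

lemma Admissible.integrableOn_gamma (hφ : Admissible φ) (hγ : 0 < γ) :
    IntegrableOn (fun u => φ (exp (-u)) * u ^ (γ - 1)) (Ioi 0) := by
  obtain ⟨hφm, C, hC⟩ := hφ
  refine ((GammaIntegral_convergent hγ).const_mul C).mono'
    (((hφm.comp (by fun_prop)).mul (by fun_prop)).aestronglyMeasurable) ?_
  refine (ae_restrict_iff' measurableSet_Ioi).2 (ae_of_all _ fun u (hu : 0 < u) => ?_)
  rw [norm_mul, norm_of_nonneg (rpow_nonneg hu.le _), ← mul_assoc]
  exact mul_le_mul_of_nonneg_right (hC _ (exp_neg_mem_Icc hu.le)) (rpow_nonneg hu.le _)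

end Admissible


section Limits

variable {μ : Measure ℝ} {A γ : ℝ} {φ ψ : ℝ → ℝ}

lemma hasFiniteLaplace_of_tendsto {L : ℝ} (hL : L ≠ 0)
    (h : Tendsto (laplaceRatio μ A γ id) (𝓝[>] 0) (𝓝 L)) : HasFiniteLaplace μ := by
  intro t ht
  obtain ⟨s, hs, hst⟩ :=
    ((h.eventually_ne hL).and (Ioo_mem_nhdsGT ht)).exists
  have hsint : IntegrableOn (fun α => exp (-s * α)) (Ici 0) μ := by
    -- otherwise the integral, hence the ratio, takes the junk value `0`
    by_contra hni
    exact hs (by rw [laplaceRatio]; simp only [id, integral_undef hni, zero_div])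
  refine hsint.mono' (by fun_prop) ((ae_restrict_iff' measurableSet_Ici).2 (ae_of_all _ ?_))
  intro α (hα : 0 ≤ α)
  rw [norm_of_nonneg (exp_pos _).le, exp_le_exp]
  nlinarith [hst.2]

lemma laplaceRatio_add (hμ : HasFiniteLaplace μ) (hφ : Admissible φ) (hψ : Admissible ψ) {t : ℝ}
    (ht : 0 < t) :
    laplaceRatio μ A γ (φ + ψ) t = laplaceRatio μ A γ φ t + laplaceRatio μ A γ ψ t := by
  simp only [laplaceRatio, Pi.add_apply]
  rw [integral_add (hφ.integrableOn_laplace hμ ht) (hψ.integrableOn_laplace hμ ht), add_div]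

lemma gammaWeighted_add (hγ : 0 < γ) (hφ : Admissible φ) (hψ : Admissible ψ) :
    gammaWeighted γ (φ + ψ) = gammaWeighted γ φ + gammaWeighted γ ψ := by
  simp only [gammaWeighted, Pi.add_apply, add_mul]
  exact integral_add (hφ.integrableOn_gamma hγ) (hψ.integrableOn_gamma hγ)

lemma laplaceRatio_const_mul (c : ℝ) (t : ℝ) :
    laplaceRatio μ A γ (fun v => c * φ v) t = c * laplaceRatio μ A γ φ t := by
  simp only [laplaceRatio, integral_const_mul, mul_div_assoc]

lemma gammaWeighted_const_mul (c : ℝ) :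
    gammaWeighted γ (fun v => c * φ v) = c * gammaWeighted γ φ := by
  simp only [gammaWeighted, mul_assoc, integral_const_mul]

lemma laplaceRatio_mono (hμ : HasFiniteLaplace μ) (hA : 0 < A) (hφ : Admissible φ)
    (hψ : Admissible ψ) (hle : ∀ v ∈ Icc (0 : ℝ) 1, φ v ≤ ψ v) {t : ℝ} (ht : 0 < t) :
    laplaceRatio μ A γ φ t ≤ laplaceRatio μ A γ ψ t := by
  refine div_le_div_of_nonneg_right ?_ (mul_pos hA (rpow_pos_of_pos ht _)).le
  refine setIntegral_mono_on (hφ.integrableOn_laplace hμ ht) (hψ.integrableOn_laplace hμ ht)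
    measurableSet_Ici fun α hα => hle _ ?_
  exact neg_mul t α ▸ exp_neg_mem_Icc (mul_nonneg ht.le hα)

lemma gammaWeighted_mono (hγ : 0 < γ) (hφ : Admissible φ) (hψ : Admissible ψ)
    (hle : ∀ v ∈ Icc (0 : ℝ) 1, φ v ≤ ψ v) : gammaWeighted γ φ ≤ gammaWeighted γ ψ :=
  setIntegral_mono_on (hφ.integrableOn_gamma hγ) (hψ.integrableOn_gamma hγ) measurableSet_Ioi
    fun u (hu : 0 < u) => mul_le_mul_of_nonneg_right (hle _ (exp_neg_mem_Icc hu.le))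
      (rpow_nonneg hu.le _)

lemma HasKaramataLimit.add (hμ : HasFiniteLaplace μ)
    (hγ : 0 < γ) (hφ : Admissible φ) (hψ : Admissible ψ)
    (hφl : HasKaramataLimit μ A γ φ) (hψl : HasKaramataLimit μ A γ ψ) :
    HasKaramataLimit μ A γ (φ + ψ) := by
  rw [HasKaramataLimit, gammaWeighted_add hγ hφ hψ, add_div]
  refine (Tendsto.add hφl hψl).congr' ?_
  filter_upwards [self_mem_nhdsWithin] with t (ht : 0 < t)
  exact (laplaceRatio_add hμ hφ hψ ht).symm

lemma HasKaramataLimit.const_mul (hφl : HasKaramataLimit μ A γ φ) (c : ℝ) :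
    HasKaramataLimit μ A γ (fun v => c * φ v) := by
  rw [HasKaramataLimit, gammaWeighted_const_mul, mul_div_assoc]
  exact (Tendsto.const_mul c hφl).congr fun t => (laplaceRatio_const_mul c t).symm

lemma HasKaramataLimit.of_squeeze (hμ : HasFiniteLaplace μ)
    (hA : 0 < A) (hγ : 0 < γ) (hφ : Admissible φ)
    (h : ∀ ε > 0, ∃ φ₁ φ₂, Admissible φ₁ ∧ Admissible φ₂ ∧
      HasKaramataLimit μ A γ φ₁ ∧ HasKaramataLimit μ A γ φ₂ ∧
      (∀ v ∈ Icc (0 : ℝ) 1, φ₁ v ≤ φ v ∧ φ v ≤ φ₂ v) ∧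
      gammaWeighted γ φ₂ ≤ gammaWeighted γ φ₁ + ε) :
    HasKaramataLimit μ A γ φ := by
  have hΓ : 0 < Gamma γ := Gamma_pos_of_pos hγ
  refine tendsto_of_forall_squeeze fun ε hε => ?_
  obtain ⟨φ₁, φ₂, h₁, h₂, h₁l, h₂l, hle, hgap⟩ := h (ε * Gamma γ) (mul_pos hε hΓ)
  have hW₁ := gammaWeighted_mono hγ h₁ hφ fun v hv => (hle v hv).1
  have hW₂ := gammaWeighted_mono hγ hφ h₂ fun v hv => (hle v hv).2
  refine ⟨_, _, _, _, h₁l, h₂l, ?_, ?_, ?_⟩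
  · rw [sub_le_iff_le_add, ← sub_le_iff_le_add', ← sub_div, div_le_iff₀ hΓ]
    linarith
  · rw [← sub_le_iff_le_add', ← sub_div, div_le_iff₀ hΓ]
    linarith
  · filter_upwards [self_mem_nhdsWithin] with t (ht : 0 < t)
    exact ⟨laplaceRatio_mono hμ hA h₁ hφ (fun v hv => (hle v hv).1) ht,
      laplaceRatio_mono hμ hA hφ h₂ (fun v hv => (hle v hv).2) ht⟩

end Limits

section Polynomials

variable {μ : Measure ℝ} {A γ : ℝ}

lemma exp_pow_succ (x : ℝ) (k : ℕ) : exp x ^ (k + 1) = exp (((k : ℝ) + 1) * x) := by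
  rw [← exp_nat_mul]
  push_cast
  rfl

lemma gammaWeighted_pow (hγ : 0 < γ) (k : ℕ) :
    gammaWeighted γ (· ^ (k + 1)) = Gamma γ * ((k : ℝ) + 1) ^ (-γ) := by
  have h := integral_rpow_mul_exp_neg_mul_rpow one_pos (by linarith : -1 < γ - 1)
    (by positivity : (0 : ℝ) < k + 1)
  simp only [rpow_one, sub_add_cancel, div_one, neg_mul, mul_one] at h
  rw [gammaWeighted, mul_comm (Gamma γ), ← h]
  refine setIntegral_congr_fun measurableSet_Ioi fun u _ => ?_
  rw [exp_pow_succ, mul_neg, mul_comm]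

lemma gammaWeighted_id (hγ : 0 < γ) : gammaWeighted γ id = Gamma γ := by
  have h := gammaWeighted_pow hγ 0
  simp only [zero_add, pow_one, Nat.cast_zero, one_rpow, mul_one] at h
  exact h

lemma laplaceRatio_pow (k : ℕ) {t : ℝ} (ht : 0 < t) :
    laplaceRatio μ A γ (· ^ (k + 1)) t
      = ((k : ℝ) + 1) ^ (-γ) * laplaceRatio μ A γ id (((k : ℝ) + 1) * t) := by
  have hk : (0 : ℝ) < k + 1 := by positivity
  have hexp (α : ℝ) : exp (-t * α) ^ (k + 1) = exp (-((k + 1) * t) * α) := by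
    rw [exp_pow_succ]
    ring_nf
  simp only [laplaceRatio, id, hexp, mul_rpow hk.le ht.le, mul_left_comm A, mul_div_assoc']
  exact (mul_div_mul_left _ _ (rpow_pos_of_pos hk _).ne').symm

lemma HasKaramataLimit.pow (hγ : 0 < γ) (hid : HasKaramataLimit μ A γ id) (k : ℕ) :
    HasKaramataLimit μ A γ (· ^ (k + 1)) := by
  have hk : (0 : ℝ) < k + 1 := by positivity
  have hΓ : Gamma γ ≠ 0 := (Gamma_pos_of_pos hγ).ne'
  rw [HasKaramataLimit, gammaWeighted_id hγ, div_self hΓ] at hid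
  rw [HasKaramataLimit, gammaWeighted_pow hγ, mul_div_cancel_left₀ _ hΓ]
  have hscale : Tendsto (((k : ℝ) + 1) * ·) (𝓝[>] 0) (𝓝[>] 0) :=
    tendsto_comap.mono_left (comap_mulLeft_nhdsGT_zero hk).ge
  have := (hid.comp hscale).const_mul (((k : ℝ) + 1) ^ (-γ))
  rw [mul_one] at this
  refine this.congr' ?_
  filter_upwards [self_mem_nhdsWithin] with t (ht : 0 < t)
  exact (laplaceRatio_pow k ht).symm

lemma HasKaramataLimit.mul_eval (hμ : HasFiniteLaplace μ)
    (hγ : 0 < γ) (hid : HasKaramataLimit μ A γ id) (p : ℝ[X]) :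
    HasKaramataLimit μ A γ (fun v => v * p.eval v) := by
  induction p using Polynomial.induction_on' with
  | add p q hp hq =>
    convert hp.add hμ hγ (admissible_mul_eval p) (admissible_mul_eval q) hq using 1
    funext v
    simp only [eval_add, mul_add, Pi.add_apply]
  | monomial n a =>
    convert (hid.pow hγ n).const_mul a using 1
    funext v
    rw [eval_monomial]
    ring

lemma HasKaramataLimit.of_continuous
    (hμ : HasFiniteLaplace μ) (hA : 0 < A) (hγ : 0 < γ)
    (hid : HasKaramataLimit μ A γ id) {g : ℝ → ℝ} (hg : Continuous g) {δ : ℝ} (hδ : 0 < δ)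
    (hg0 : ∀ v ∈ Icc 0 δ, g v = 0) : HasKaramataLimit μ A γ g := by
  -- dividing by `max v δ` instead of `v` keeps `H` continuous and changes nothing where `g ≠ 0`
  set H := fun v => g v / max v δ
  have hH : Continuous H :=
    hg.div (continuous_id.max continuous_const) fun v => (hδ.trans_le (le_max_right v δ)).ne'
  have hgH : ∀ v ∈ Icc (0 : ℝ) 1, g v = v * H v := by
    intro v hv
    rcases le_total v δ with hvδ | hδv
    · simp [H, hg0 v ⟨hv.1, hvδ⟩]
    · simp only [H, max_eq_left hδv]
      field_simp [(hδ.trans_le hδv).ne']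
  refine .of_squeeze hμ hA hγ (admissible_of_continuous_of_eqOn_zero hg hδ hg0) fun ε hε => ?_
  have hΓ : 0 < Gamma γ := Gamma_pos_of_pos hγ
  set η := ε / (2 * Gamma γ)
  obtain ⟨p, hp⟩ := exists_polynomial_near_of_continuousOn 0 1 H hH.continuousOn η (by positivity)
  refine ⟨fun v => v * (p - C η).eval v, fun v => v * (p + C η).eval v, admissible_mul_eval _,
    admissible_mul_eval _, .mul_eval hμ hγ hid _, .mul_eval hμ hγ hid _, fun v hv => ?_, ?_⟩
  · have hpH := abs_lt.1 (hp v hv)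
    simp only [eval_sub, eval_add, eval_C, hgH v hv]
    constructor <;> exact mul_le_mul_of_nonneg_left (by linarith) hv.1
  · have hsplit : (fun v => v * (p + C η).eval v)
        = (fun v => v * (p - C η).eval v) + fun v => v * (C (2 * η)).eval v := by
      funext v
      simp only [eval_add, eval_sub, eval_C, Pi.add_apply]
      ring
    have hlin : gammaWeighted γ (fun v => v * (C (2 * η)).eval v) = 2 * η * Gamma γ := by
      simp only [eval_C, mul_comm _ (2 * η)]
      exact (gammaWeighted_const_mul (φ := id) _).trans (by rw [gammaWeighted_id hγ])
    have hηε : 2 * η * Gamma γ = ε := by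
      simp only [η]
      field_simp
    rw [hsplit, gammaWeighted_add hγ (admissible_mul_eval _) (admissible_mul_eval _), hlin, hηε]

end Polynomials

def ramp (a b v : ℝ) : ℝ := smoothTransition ((v - a) / (b - a))

section Ramp

variable {a b c v : ℝ}

lemma continuous_ramp (a b : ℝ) : Continuous (ramp a b) :=
  smoothTransition.continuous.comp ((continuous_id.sub continuous_const).div_const _)

lemma ramp_eq_zero (hab : a < b) (hv : v ≤ a) : ramp a b v = 0 :=
  smoothTransition.zero_of_nonpos (div_nonpos_of_nonpos_of_nonneg (by linarith) (by linarith))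

lemma ramp_eq_one (hab : a < b) (hv : b ≤ v) : ramp a b v = 1 :=
  smoothTransition.one_of_one_le ((one_le_div (by linarith)).2 (by linarith))

lemma ramp_le_one (a b v : ℝ) : ramp a b v ≤ 1 := smoothTransition.le_one _

lemma ramp_nonneg (a b v : ℝ) : 0 ≤ ramp a b v := smoothTransition.nonneg _

lemma admissible_ramp (ha : 0 < a) (hab : a < b) : Admissible (ramp a b) :=
  admissible_of_continuous_of_eqOn_zero (continuous_ramp a b) ha fun _ hv => ramp_eq_zero hab hv.2

lemma ramp_le_indicator (hbc : b < c) (v : ℝ) : ramp b c v ≤ (Ici b).indicator 1 v := by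
  by_cases hv : v ∈ Ici b
  · simpa [hv] using ramp_le_one b c v
  · simp [hv, ramp_eq_zero hbc (le_of_lt (not_le.1 hv))]

lemma indicator_le_ramp (hab : a < b) (v : ℝ) : (Ici b).indicator 1 v ≤ ramp a b v := by
  by_cases hv : v ∈ Ici b
  · simp [hv, ramp_eq_one hab hv]
  · simpa [hv] using ramp_nonneg a b v

lemma ramp_le_ramp_add_indicator (hab : a < b) (hbc : b < c) (v : ℝ) :
    ramp a b v ≤ ramp b c v + (Ico a c).indicator 1 v := by
  have hind : 0 ≤ (Ico a c).indicator (1 : ℝ → ℝ) v := indicator_nonneg (fun _ _ => zero_le_one) _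
  rcases lt_or_ge v a with hva | hav
  · linarith [ramp_eq_zero hab hva.le, ramp_nonneg b c v]
  rcases lt_or_ge v c with hvc | hcv
  · have hv : v ∈ Ico a c := ⟨hav, hvc⟩
    rw [indicator_of_mem hv, Pi.one_apply]
    linarith [ramp_le_one a b v, ramp_nonneg b c v]
  · linarith [ramp_eq_one hbc hcv, ramp_le_one a b v]

end Ramp

section Indicator

variable {γ : ℝ}

lemma gammaWeighted_indicator {s : Set ℝ} (hs : MeasurableSet s) :
    gammaWeighted γ (s.indicator 1) = ∫ u in Ioi 0 ∩ (fun u => exp (-u)) ⁻¹' s, u ^ (γ - 1) := by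
  rw [← setIntegral_indicator (hs.preimage (by fun_prop)), gammaWeighted]
  congr 1 with u
  by_cases hu : exp (-u) ∈ s <;> simp [hu]

lemma integral_Ioc_rpow_sub_one (hγ : 0 < γ) {a b : ℝ} (hab : a ≤ b) :
    ∫ u in Ioc a b, u ^ (γ - 1) = (b ^ γ - a ^ γ) / γ := by
  rw [← intervalIntegral.integral_of_le hab, integral_rpow (Or.inl (by linarith)), sub_add_cancel]

lemma gammaWeighted_indicator_Ico (hγ : 0 < γ) {a b : ℝ} (ha : 0 ≤ a) (hab : a ≤ b) :
    gammaWeighted γ ((Ico (exp (-b)) (exp (-a))).indicator 1) = (b ^ γ - a ^ γ) / γ := by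
  have hset : Ioi 0 ∩ (fun u => exp (-u)) ⁻¹' Ico (exp (-b)) (exp (-a)) = Ioc a b := by
    ext u
    simp only [mem_inter_iff, mem_Ioi, mem_preimage, mem_Ico, exp_le_exp, exp_lt_exp,
      neg_le_neg_iff, neg_lt_neg_iff, mem_Ioc]
    exact ⟨fun h => ⟨h.2.2, h.2.1⟩, fun h => ⟨ha.trans_lt h.1, h.2, h.1⟩⟩
  rw [gammaWeighted_indicator measurableSet_Ico, hset, integral_Ioc_rpow_sub_one hγ hab]

lemma gammaWeighted_indicator_Ici (hγ : 0 < γ) :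
    gammaWeighted γ ((Ici (exp (-1))).indicator 1) = 1 / γ := by
  have hset : Ioi 0 ∩ (fun u => exp (-u)) ⁻¹' Ici (exp (-1)) = Ioc 0 1 := by
    ext u
    simp only [mem_inter_iff, mem_Ioi, mem_preimage, mem_Ici, exp_le_exp, mem_Ioc, neg_le_neg_iff]
  rw [gammaWeighted_indicator measurableSet_Ici, hset, integral_Ioc_rpow_sub_one hγ zero_le_one,
    one_rpow, zero_rpow hγ.ne', sub_zero]

lemma laplaceRatio_indicator_Ici (μ : Measure ℝ) (A : ℝ) {t : ℝ} (ht : 0 < t) :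
    laplaceRatio μ A γ ((Ici (exp (-1))).indicator 1) t = μ.real (Icc 0 t⁻¹) / (A * t ^ (-γ)) := by
  have hpt (α : ℝ) :
      (Ici (exp (-1))).indicator 1 (exp (-t * α)) = (Iic t⁻¹).indicator (1 : ℝ → ℝ) α := by
    have hiff : exp (-t * α) ∈ Ici (exp (-1)) ↔ α ∈ Iic t⁻¹ := by
      rw [mem_Ici, mem_Iic, exp_le_exp, inv_eq_one_div, le_div_iff₀' ht]
      constructor <;> intro <;> linarith
    by_cases hα : α ∈ Iic t⁻¹
    · rw [indicator_of_mem (hiff.2 hα), indicator_of_mem hα, Pi.one_apply, Pi.one_apply]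
    · rw [indicator_of_notMem (mt hiff.1 hα), indicator_of_notMem hα]
  rw [laplaceRatio, setIntegral_congr_fun measurableSet_Ici fun α _ => hpt α,
    setIntegral_indicator measurableSet_Iic, Ici_inter_Iic]
  simp only [Pi.one_apply, setIntegral_const, smul_eq_mul, mul_one]

end Indicator

section Tauberian

variable {μ : Measure ℝ} {A γ : ℝ}

lemma exists_mem_Ioo_rpow_sub_rpow_div_le (γ : ℝ) {ε : ℝ} (hε : 0 < ε) :
    ∃ w ∈ Ioo (0 : ℝ) 1, ((1 + w) ^ γ - (1 - w) ^ γ) / γ ≤ ε := by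
  have hcont : ContinuousAt (fun w : ℝ => ((1 + w) ^ γ - (1 - w) ^ γ) / γ) 0 := by
    fun_prop (disch := norm_num)
  have hlim := hcont.tendsto.mono_left (nhdsWithin_le_nhds (s := Ioi 0))
  simp only [add_zero, sub_zero, sub_self, zero_div] at hlim
  obtain ⟨w, hwε, hw⟩ := ((hlim.eventually (ge_mem_nhds hε)).and (Ioo_mem_nhdsGT one_pos)).exists
  exact ⟨w, hw, hwε⟩

lemma HasKaramataLimit.indicator_Ici
    (hμ : HasFiniteLaplace μ) (hA : 0 < A) (hγ : 0 < γ)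
    (hid : HasKaramataLimit μ A γ id) : HasKaramataLimit μ A γ ((Ici (exp (-1))).indicator 1) := by
  refine .of_squeeze hμ hA hγ (admissible_indicator measurableSet_Ici (exp_pos _) subset_rfl)
    fun ε hε => ?_
  obtain ⟨w, ⟨hw0, hw1⟩, hwε⟩ := exists_mem_Ioo_rpow_sub_rpow_div_le γ hε
  set a := exp (-(1 + w))
  set b := exp (-1)
  set c := exp (-(1 - w))
  have hab : a < b := exp_lt_exp.2 (by linarith)
  have hbc : b < c := exp_lt_exp.2 (by linarith)
  have hb : 0 < b := exp_pos _
  have hramp {a b : ℝ} (ha : 0 < a) (hab : a < b) : HasKaramataLimit μ A γ (ramp a b) :=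
    .of_continuous hμ hA hγ hid (continuous_ramp a b) ha fun _ hv => ramp_eq_zero hab hv.2
  have hwin : Admissible ((Ico a c).indicator 1) :=
    admissible_indicator measurableSet_Ico (exp_pos _) Ico_subset_Ici_self
  refine ⟨ramp b c, ramp a b, admissible_ramp hb hbc, admissible_ramp (exp_pos _) hab,
    hramp hb hbc, hramp (exp_pos _) hab,
    fun v _ => ⟨ramp_le_indicator hbc v, indicator_le_ramp hab v⟩, ?_⟩
  calc gammaWeighted γ (ramp a b)
      ≤ gammaWeighted γ (ramp b c + (Ico a c).indicator 1) :=
        gammaWeighted_mono hγ (admissible_ramp (exp_pos _) hab)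
          ((admissible_ramp hb hbc).add hwin) fun v _ => ramp_le_ramp_add_indicator hab hbc v
    _ = gammaWeighted γ (ramp b c) + ((1 + w) ^ γ - (1 - w) ^ γ) / γ := by
        rw [gammaWeighted_add hγ (admissible_ramp hb hbc) hwin,
          gammaWeighted_indicator_Ico hγ (by linarith) (by linarith)]
    _ ≤ gammaWeighted γ (ramp b c) + ε := by linarith

lemma tendsto_measureReal_Icc_div
    (hμ : HasFiniteLaplace μ) (hA : 0 < A) (hγ : 0 < γ)
    (hid : HasKaramataLimit μ A γ id) :
    Tendsto (fun τ => μ.real (Icc 0 τ) / (A * τ ^ γ)) atTop (𝓝 (Gamma (γ + 1))⁻¹) := by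
  have h := HasKaramataLimit.indicator_Ici hμ hA hγ hid
  rw [HasKaramataLimit, gammaWeighted_indicator_Ici hγ, div_div, ← Gamma_add_one hγ.ne',
    one_div] at h
  refine (h.comp tendsto_inv_atTop_nhdsGT_zero).congr' ?_
  filter_upwards [eventually_gt_atTop 0] with τ hτ
  rw [Function.comp_apply, laplaceRatio_indicator_Ici μ A (inv_pos.2 hτ), inv_inv,
    inv_rpow hτ.le, ← rpow_neg hτ.le, neg_neg]

end Tauberian

end Karamata

end

open Karamata

/-- Karamata's Tauberian theorem. -/
theorem stmt12 (F : StieltjesFunction ℝ) (A γ : ℝ) (hA : 0 < A) (hγ : 0 < γ)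
    (h : Tendsto
      (fun t : ℝ => (∫ α in Ici (0 : ℝ), Real.exp (-t * α) ∂F.measure) / (A * t ^ (-γ)))
      (nhdsWithin 0 (Ioi 0)) (nhds 1)) :
    Tendsto (fun τ : ℝ => F τ / (A * τ ^ γ / Real.Gamma (γ + 1))) atTop (nhds 1) := by
  have hμ : HasFiniteLaplace F.measure := hasFiniteLaplace_of_tendsto one_ne_zero h
  have hid : HasKaramataLimit F.measure A γ id := by
    rwa [HasKaramataLimit, gammaWeighted_id hγ, div_self (Gamma_pos_of_pos hγ).ne']
  have hΓ : Gamma (γ + 1) ≠ 0 := (Gamma_pos_of_pos (by linarith)).ne'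
  have hFμ (τ : ℝ) (hτ : 0 ≤ τ) : F τ = F.measure.real (Icc 0 τ) + Function.leftLim F 0 := by
    rw [measureReal_def, F.measure_Icc, ENNReal.toReal_ofReal
      (sub_nonneg.2 ((F.mono.leftLim_le le_rfl).trans (F.mono hτ))), sub_add_cancel]
  have hlim := ((tendsto_measureReal_Icc_div hμ hA hγ hid).const_mul (Gamma (γ + 1))).add
    ((((tendsto_rpow_atTop hγ).const_mul_atTop hA).inv_tendsto_atTop).const_mul
      (Gamma (γ + 1) * Function.leftLim F 0))
  rw [mul_inv_cancel₀ hΓ, mul_zero, add_zero] at hlim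
  refine hlim.congr' ?_
  filter_upwards [eventually_gt_atTop 0] with τ hτ
  have hAτ : 0 < A * τ ^ γ := mul_pos hA (rpow_pos_of_pos hτ γ)
  rw [hFμ τ hτ.le, Pi.inv_apply]
  field_simp
end

section
/- Fix ε ∈ (0,1) and γ ∈ [0,1]. For each real λ ≥ 1+ε there exist a unique nonnegative integer n and integer j with 0 ≤ j ≤ N_n − 1, where N_n = ⌈(1+ε)^{nγ}⌉, such that (1+ε)^n (1 + jε/N_n) ≤ λ < (1+ε)^n (1 + (j+1)ε/N_n). Moreover, setting λ' = (1+ε)^n (1 + jε/N_n), for ε sufficiently small (independently of λ) one has |λ² − (λ')²| ≤ 3 ε (λ²)^{1−γ/2}. -/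
/-- `N_n = ⌈(1+ε)^{nγ}⌉`. -/
noncomputable def Nsub (ε γ : ℝ) (n : ℕ) : ℕ := ⌈(1 + ε) ^ ((n : ℝ) * γ)⌉₊

/-- The left endpoint `(1+ε)^n (1 + jε/N_n)` of the `(n,j)` subinterval. -/
noncomputable def leftPt (ε γ : ℝ) (n j : ℕ) : ℝ :=
  (1 + ε) ^ n * (1 + (j : ℝ) * ε / (Nsub ε γ n : ℝ))

lemma Nsub_pos {ε : ℝ} (hε : 0 < ε) (γ : ℝ) (n : ℕ) : 0 < Nsub ε γ n := by
  have : (0:ℝ) < (1 + ε) ^ ((n : ℝ) * γ) :=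
    Real.rpow_pos_of_pos (by linarith) _
  exact Nat.ceil_pos.mpr this

lemma leftPt_mono {ε : ℝ} (hε : 0 < ε) (γ : ℝ) (n : ℕ) {j k : ℕ} (h : j ≤ k) :
    leftPt ε γ n j ≤ leftPt ε γ n k := by
  have hN : (0:ℝ) < (Nsub ε γ n : ℝ) := by exact_mod_cast Nsub_pos hε γ n
  have hA : (0:ℝ) ≤ (1 + ε) ^ n := pow_nonneg (by linarith) n
  have hj : (j:ℝ) ≤ (k:ℝ) := by exact_mod_cast h
  unfold leftPt
  gcongr

lemma leftPt_top {ε : ℝ} (hε : 0 < ε) (γ : ℝ) (n : ℕ) :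
    leftPt ε γ n (Nsub ε γ n) = (1 + ε) ^ (n + 1) := by
  have hN : (0:ℝ) < (Nsub ε γ n : ℝ) := by exact_mod_cast Nsub_pos hε γ n
  unfold leftPt
  have h : (Nsub ε γ n : ℝ) * ε / (Nsub ε γ n : ℝ) = ε := by
    field_simp
  rw [h]; ring

lemma leftPt_ge {ε : ℝ} (hε : 0 < ε) (γ : ℝ) (n j : ℕ) :
    (1 + ε) ^ n ≤ leftPt ε γ n j := by
  have hN : (0:ℝ) < (Nsub ε γ n : ℝ) := by exact_mod_cast Nsub_pos hε γ n
  have hA : (0:ℝ) < (1 + ε) ^ n := pow_pos (by linarith) n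
  unfold leftPt
  have : 0 ≤ (j:ℝ) * ε / (Nsub ε γ n : ℝ) := by positivity
  nlinarith

lemma leftPt_le_iff {ε : ℝ} (hε : 0 < ε) (γ : ℝ) (n j : ℕ) (lam : ℝ) :
    leftPt ε γ n j ≤ lam ↔
      (j : ℝ) ≤ (lam / (1+ε)^n - 1) * (Nsub ε γ n : ℝ) / ε := by
  have hN : (0:ℝ) < (Nsub ε γ n : ℝ) := by exact_mod_cast Nsub_pos hε γ n
  have hA : (0:ℝ) < (1 + ε) ^ n := pow_pos (by linarith) n
  unfold leftPt
  rw [le_div_iff₀ hε, ← div_le_iff₀ hN, le_sub_iff_add_le, le_div_iff₀ hA]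
  constructor <;> intro h <;> linarith

lemma part1 {ε : ℝ} (hε : 0 < ε) (γ : ℝ) (lam : ℝ) (hlam : 1 + ε ≤ lam) :
    ∃! p : ℕ × ℕ, p.2 + 1 ≤ Nsub ε γ p.1 ∧
      leftPt ε γ p.1 p.2 ≤ lam ∧ lam < leftPt ε γ p.1 (p.2 + 1) := by
  have hA1 : (1:ℝ) < 1 + ε := by linarith
  have hx : (1:ℝ) ≤ lam := by linarith
  obtain ⟨n, hn1, hn2⟩ := exists_nat_pow_near hx hA1
  have hN : (0:ℝ) < (Nsub ε γ n : ℝ) := by exact_mod_cast Nsub_pos hε γ n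
  have hA : (0:ℝ) < (1 + ε) ^ n := pow_pos (by linarith) n
  set t : ℝ := (lam / (1+ε)^n - 1) * (Nsub ε γ n : ℝ) / ε with ht_def
  have ht0 : 0 ≤ t := by
    have h1 : (1:ℝ) ≤ lam / (1+ε)^n := (one_le_div hA).mpr hn1
    have : 0 ≤ lam / (1+ε)^n - 1 := by linarith
    positivity
  have htN : t < (Nsub ε γ n : ℝ) := by
    have h1 : lam / (1+ε)^n < 1 + ε := by
      rw [div_lt_iff₀ hA]
      calc lam < (1+ε)^(n+1) := hn2
        _ = (1+ε) * (1+ε)^n := by ring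
    rw [ht_def, div_lt_iff₀ hε]
    nlinarith
  set j : ℕ := ⌊t⌋₊ with hj_def
  have hj1 : (j:ℝ) ≤ t := Nat.floor_le ht0
  have hj2 : t < (j:ℝ) + 1 := Nat.lt_floor_add_one t
  have hjN : j + 1 ≤ Nsub ε γ n := by
    have : (j:ℝ) < (Nsub ε γ n : ℝ) := lt_of_le_of_lt hj1 htN
    have : j < Nsub ε γ n := by exact_mod_cast this
    omega
  refine ⟨(n, j), ⟨hjN, (leftPt_le_iff hε γ n j lam).mpr hj1, ?_⟩, ?_⟩
  · rw [← not_le, leftPt_le_iff hε]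
    push_cast
    linarith
  · rintro ⟨m, k⟩ ⟨hk, h2, h3⟩
    simp only at hk h2 h3
    have hm1 : (1+ε)^m ≤ lam := le_trans (leftPt_ge hε γ m k) h2
    have hm2 : lam < (1+ε)^(m+1) :=
      h3.trans_le ((leftPt_mono hε γ m hk).trans_eq (leftPt_top hε γ m))
    have hmn : m = n := by
      by_contra hne
      rcases Nat.lt_or_ge m n with h | h
      · have : (1+ε)^(m+1) ≤ (1+ε)^n := pow_le_pow_right₀ hA1.le h
        linarith
      · have h' : n < m := lt_of_le_of_ne h (Ne.symm hne)
        have : (1+ε)^(n+1) ≤ (1+ε)^m := pow_le_pow_right₀ hA1.le h'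
        linarith
    subst hmn
    have hk1 : (k:ℝ) ≤ t := (leftPt_le_iff hε γ m k lam).mp h2
    have hk2 : t < (k:ℝ) + 1 := by
      by_contra hcon
      push_neg at hcon
      have : leftPt ε γ m (k+1) ≤ lam := by
        rw [leftPt_le_iff hε]; push_cast; linarith
      linarith
    have hkj : k = j := by
      have hle : k ≤ j := Nat.le_floor hk1
      have : (j:ℝ) < (k:ℝ) + 1 := lt_of_le_of_lt hj1 hk2
      have : j < k + 1 := by exact_mod_cast this
      omega
    simp [hkj]

lemma part2 {ε γ : ℝ} (hε : 0 < ε) (hγ : γ ∈ Set.Icc (0:ℝ) 1) (lam : ℝ)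
    (hlam : 1 + ε ≤ lam) (n j : ℕ) (hj : j + 1 ≤ Nsub ε γ n)
    (h2 : leftPt ε γ n j ≤ lam) (h3 : lam < leftPt ε γ n (j + 1)) :
    |lam ^ 2 - (leftPt ε γ n j) ^ 2| ≤ 3 * ε * (lam ^ 2) ^ (1 - γ / 2) := by
  obtain ⟨hγ0, hγ1⟩ := hγ
  have hN : (0:ℝ) < (Nsub ε γ n : ℝ) := by exact_mod_cast Nsub_pos hε γ n
  have hA : (0:ℝ) < (1 + ε) ^ n := pow_pos (by linarith) n
  have hlam0 : (0:ℝ) < lam := by linarith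
  set L : ℝ := leftPt ε γ n j with hL_def
  have hL0 : 0 < L := lt_of_lt_of_le hA (leftPt_ge hε γ n j)
  have hstep : leftPt ε γ n (j+1) = L + (1+ε)^n * ε / (Nsub ε γ n : ℝ) := by
    rw [hL_def]; unfold leftPt; push_cast; field_simp; ring
  have diff : lam - L < (1+ε)^n * ε / (Nsub ε γ n : ℝ) := by
    rw [hstep] at h3; linarith
  have habs : |lam ^ 2 - L ^ 2| = lam ^ 2 - L ^ 2 := by
    apply abs_of_nonneg; nlinarith
  -- key estimate : (1+ε)^n / N ≤ lam ^ (1-γ)  (rpow)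
  have hAn : (1+ε)^n ≤ lam := le_trans (leftPt_ge hε γ n j) h2
  have hNge : (1+ε) ^ ((n:ℝ) * γ) ≤ (Nsub ε γ n : ℝ) := Nat.le_ceil _
  have hrposγ : (0:ℝ) < (1+ε) ^ ((n:ℝ) * γ) := Real.rpow_pos_of_pos (by linarith) _
  have key : (1+ε)^n / (Nsub ε γ n : ℝ) ≤ lam ^ ((1:ℝ) - γ) := by
    have step1 : (1+ε)^n / (Nsub ε γ n : ℝ) ≤ (1+ε)^n / (1+ε) ^ ((n:ℝ) * γ) := by
      gcongr
    have step2 : (1+ε)^n / (1+ε) ^ ((n:ℝ) * γ) = (1+ε) ^ ((n:ℝ) * (1 - γ)) := by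
      rw [← Real.rpow_natCast (1+ε) n, ← Real.rpow_sub (by linarith)]
      congr 1; ring
    have step3 : (1+ε) ^ ((n:ℝ) * (1 - γ)) ≤ lam ^ ((1:ℝ) - γ) := by
      rw [Real.rpow_mul (by linarith : (0:ℝ) ≤ 1+ε), Real.rpow_natCast]
      exact Real.rpow_le_rpow hA.le hAn (by linarith)
    calc (1+ε)^n / (Nsub ε γ n : ℝ) ≤ _ := step1
      _ = _ := step2
      _ ≤ _ := step3
  have h4 : (lam - L) * (lam + L) ≤ ((1+ε)^n * ε / (Nsub ε γ n : ℝ)) * (2 * lam) := by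
    apply mul_le_mul diff.le (by linarith) (by linarith) (by positivity)
  have h5 : ((1+ε)^n * ε / (Nsub ε γ n : ℝ)) * (2 * lam)
      = 2 * ε * ((1+ε)^n / (Nsub ε γ n : ℝ)) * lam := by ring
  have h6 : 2 * ε * ((1+ε)^n / (Nsub ε γ n : ℝ)) * lam
      ≤ 2 * ε * lam ^ ((1:ℝ) - γ) * lam := by
    gcongr
  have h7 : lam ^ ((1:ℝ) - γ) * lam = lam ^ ((2:ℝ) - γ) := by
    nth_rewrite 2 [← Real.rpow_one lam]
    rw [← Real.rpow_add hlam0]; congr 1; ring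
  have h8 : (lam ^ 2 : ℝ) ^ (1 - γ/2) = lam ^ ((2:ℝ) - γ) := by
    rw [← Real.rpow_natCast lam 2, ← Real.rpow_mul hlam0.le]
    congr 1; push_cast; ring
  have hrpos : (0:ℝ) ≤ lam ^ ((2:ℝ) - γ) := (Real.rpow_pos_of_pos hlam0 _).le
  rw [habs, h8]
  nlinarith [h4, h6]

theorem stmt19 :
    (∀ ε : ℝ, ε ∈ Set.Ioo (0 : ℝ) 1 → ∀ γ : ℝ, γ ∈ Set.Icc (0 : ℝ) 1 →
      ∀ lam : ℝ, 1 + ε ≤ lam →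
        ∃! p : ℕ × ℕ, p.2 + 1 ≤ Nsub ε γ p.1 ∧
          leftPt ε γ p.1 p.2 ≤ lam ∧ lam < leftPt ε γ p.1 (p.2 + 1)) ∧
    (∃ ε₀ : ℝ, 0 < ε₀ ∧ ∀ ε : ℝ, 0 < ε → ε ≤ ε₀ →
      ∀ γ : ℝ, γ ∈ Set.Icc (0 : ℝ) 1 →
      ∀ lam : ℝ, 1 + ε ≤ lam → ∀ n j : ℕ,
        j + 1 ≤ Nsub ε γ n →
        leftPt ε γ n j ≤ lam → lam < leftPt ε γ n (j + 1) →
        |lam ^ 2 - (leftPt ε γ n j) ^ 2| ≤ 3 * ε * (lam ^ 2) ^ (1 - γ / 2)) := by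
  constructor
  · intro ε hε γ hγ lam hlam
    exact part1 hε.1 γ lam hlam
  · exact ⟨1, one_pos, fun ε hε _ γ hγ lam hlam n j hj h2 h3 =>
      part2 hε hγ lam hlam n j hj h2 h3⟩
end
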